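/- arXiv:0806.2264 — 4 statements merged into one kernel-verified Lean document; each statement's English description precedes it below -/
import Mathlib

section
/- (Visser) The family of all non-empty β-co-r.e. subsets of Λ has the finite intersection property: for any finitely many non-empty β-co-r.e. sets V₁,…,Vₙ ⊆ Λ, the intersection V₁ ∩ … ∩ Vₙ is non-empty. -/
universe u v

/-- Untyped λ-terms in de Bruijn notation (over the countably infinite
supply of variables `ℕ`). -/
inductive Term : Type
  | var : ℕ → Term
  | app : Term → Term → Term
  | lam : Term → Term
  deriving DecidableEq

namespace Term

/-- Shift the free variables `≥ d` up by one. -/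
def lift (d : ℕ) : Term → Term
  | var n => if n < d then var n else var (n + 1)
  | app M N => app (lift d M) (lift d N)
  | lam M => lam (lift (d + 1) M)

/-- Capture-avoiding substitution of `N` for the free variable `k`. -/
def subst : Term → ℕ → Term → Term
  | var n, k, N => if n = k then N else if k < n then var (n - 1) else var n
  | app P Q, k, N => app (subst P k N) (subst Q k N)
  | lam P, k, N => lam (subst P (k + 1) (lift 0 N))

/-- One-step β-reduction. -/
inductive Step : Term → Term → Prop
  | beta (M N : Term) : Step (app (lam M) N) (subst M 0 N)
  | appL {M M' : Term} (N : Term) : Step M M' → Step (app M N) (app M' N)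
  | appR (M : Term) {N N' : Term} : Step N N' → Step (app M N) (app M N')
  | abs {M M' : Term} : Step M M' → Step (lam M) (lam M')

/-- β-conversion: the least equivalence relation containing one-step β-reduction. -/
inductive BetaConv : Term → Term → Prop
  | of {M N : Term} : Step M N → BetaConv M N
  | refl (M : Term) : BetaConv M M
  | symm {M N : Term} : BetaConv M N → BetaConv N M
  | trans {M N P : Term} : BetaConv M N → BetaConv N P → BetaConv M P

/-- All free variables are `< d`. -/
def BoundedBy : Term → ℕ → Prop
  | var n, d => n < d
  | app M N, d => BoundedBy M d ∧ BoundedBy N d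
  | lam M, d => BoundedBy M (d + 1)

/-- Closed λ-terms. -/
def Closed (M : Term) : Prop := BoundedBy M 0

/-- Terms of the form `y M₁ ⋯ Mₖ` (a variable applied to arguments). -/
inductive IsVarApp : Term → Prop
  | var (n : ℕ) : IsVarApp (var n)
  | app {M : Term} (N : Term) : IsVarApp M → IsVarApp (app M N)

/-- Head normal forms `λx₁…xₙ. y M₁ ⋯ Mₖ`. -/
inductive IsHnf : Term → Prop
  | head {M : Term} : IsVarApp M → IsHnf M
  | abs {M : Term} : IsHnf M → IsHnf (lam M)

/-- A λ-term is solvable if it is β-convertible to a head normal form. -/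
def Solvable (M : Term) : Prop := ∃ N, BetaConv M N ∧ IsHnf N

/-- Unsolvable λ-terms. -/
def Unsolvable (M : Term) : Prop := ¬ Solvable M

/-- β-normal forms: terms containing no β-redex. -/
def IsNormal : Term → Prop
  | var _ => True
  | lam M => IsNormal M
  | app M N => (∀ P, M ≠ lam P) ∧ IsNormal M ∧ IsNormal N

/-- A fixed effective bijective Gödel numbering of λ-terms. -/
def code : Term → ℕ
  | var n => 3 * n
  | app M N => 3 * Nat.pair (code M) (code N) + 1
  | lam M => 3 * code M + 2

/-- `δ = λx.xx`. -/
def delta : Term := lam (app (var 0) (var 0))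

/-- `Ω = (λx.xx)(λx.xx)`. -/
def Omega : Term := app delta delta

/-- `I = λx.x`. -/
def Idt : Term := lam (var 0)

end Term

open Term

/-- A set of λ-terms is r.e. if its set of Gödel codes is r.e. -/
def TermSetRe (V : Set Term) : Prop := REPred fun n : ℕ => ∃ M ∈ V, code M = n

/-- A set of λ-terms is co-r.e. if its set of Gödel codes is co-r.e.; since the
numbering is bijective this means that the code set of the complement is r.e. -/
def TermSetCoRe (V : Set Term) : Prop := TermSetRe Vᶜ

/-- β-co-r.e. sets: co-r.e. sets of λ-terms closed under β-conversion. -/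
def BetaCoRe (V : Set Term) : Prop :=
  (∀ M N, M ∈ V → BetaConv M N → N ∈ V) ∧ TermSetCoRe V

/-- A set of pairs of λ-terms is r.e. if the corresponding set of codes of
pairs is r.e. -/
def PairsRe (T : Set (Term × Term)) : Prop :=
  REPred fun n : ℕ => ∃ p ∈ T, Nat.pair (code p.1) (code p.2) = n

/-- λ-theories: congruences on Λ containing β-conversion. -/
def IsLambdaTheory (T : Term → Term → Prop) : Prop :=
  Equivalence T ∧
  (∀ M M' N N', T M M' → T N N' → T (Term.app M N) (Term.app M' N')) ∧
  (∀ M M', T M M' → T (Term.lam M) (Term.lam M')) ∧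
  (∀ M N, BetaConv M N → T M N)

/-- Partial pairs (as raw data): a carrier set together with a partial map `j`,
given as an `Option`-valued map on pairs of a subset and an element. -/
structure PrePair (α : Type u) : Type u where
  carrier : Set α
  j : Set α × α → Option α

namespace PrePair

variable {α : Type u}

/-- The defining conditions of a partial pair: the carrier is non-empty and `j`
is a partial injection `A* × A ⇀ A`. -/
def Valid (P : PrePair α) : Prop :=
  P.carrier.Nonempty ∧
  (∀ a x y, P.j (a, x) = some y →
      a.Finite ∧ a ⊆ P.carrier ∧ x ∈ P.carrier ∧ y ∈ P.carrier) ∧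
  (∀ p q y, P.j p = some y → P.j q = some y → p = q)

/-- Total pairs: `j` is defined on every pair of a finite subset of the
carrier and an element of the carrier. -/
def Total (P : PrePair α) : Prop :=
  ∀ a x, a.Finite → a ⊆ P.carrier → x ∈ P.carrier → ∃ y, P.j (a, x) = some y

/-- Webs of graph models: total pairs with infinite carrier. -/
def IsGraphModel (P : PrePair α) : Prop := P.Valid ∧ P.Total ∧ P.carrier.Infinite

/-- The subpair relation `A ⊑ B`. -/
def Subpair (P Q : PrePair α) : Prop :=
  P.carrier ⊆ Q.carrier ∧ ∀ p y, P.j p = some y → Q.j p = some y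

end PrePair

/-- Consing a value onto an environment (de Bruijn style). -/
def envCons {α : Type u} (s : Set α) (ρ : ℕ → Set α) : ℕ → Set α
  | 0 => s
  | n + 1 => ρ n

/-- The interpretation of a λ-term with respect to a partial pair and an
environment. -/
def interp {α : Type u} (P : PrePair α) : Term → (ℕ → Set α) → Set α
  | Term.var n, ρ => ρ n
  | Term.app M N, ρ =>
      {y | ∃ a : Set α, a.Finite ∧ a ⊆ interp P N ρ ∧
        ∃ z, P.j (a, y) = some z ∧ z ∈ interp P M ρ}
  | Term.lam M, ρ =>
      {y | ∃ (a : Set α) (x : α), a.Finite ∧ P.j (a, x) = some y ∧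
        x ∈ interp P M (envCons a ρ)}

/-- The interpretation of a closed λ-term. -/
def interpC {α : Type u} (P : PrePair α) (M : Term) : Set α :=
  interp P M fun _ => (∅ : Set α)

/-- The order theory of (the graph model generated by) a pair. -/
def ThLe {α : Type u} (P : PrePair α) : Set (Term × Term) :=
  {p | ∀ ρ : ℕ → Set α, (∀ n, ρ n ⊆ P.carrier) → interp P p.1 ρ ⊆ interp P p.2 ρ}

/-- The equational theory of (the graph model generated by) a pair. -/
def Th {α : Type u} (P : PrePair α) : Set (Term × Term) :=
  {p | ∀ ρ : ℕ → Set α, (∀ n, ρ n ⊆ P.carrier) → interp P p.1 ρ = interp P p.2 ρ}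

/-- Morphisms of partial pairs. -/
def IsMorphism {α : Type u} {β : Type v} (P : PrePair α) (Q : PrePair β)
    (f : α → β) : Prop :=
  Set.MapsTo f P.carrier Q.carrier ∧
  ∀ a x y, a ⊆ P.carrier → x ∈ P.carrier → P.j (a, x) = some y →
    Q.j (f '' a, f x) = some (f y)

/-- Isomorphisms of partial pairs: morphisms which are bijections between the
carriers and whose inverse is also a morphism. -/
def IsIso {α : Type u} {β : Type v} (P : PrePair α) (Q : PrePair β)
    (f : α → β) : Prop :=
  IsMorphism P Q f ∧
  ∃ g : β → α, IsMorphism Q P g ∧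
    (∀ x ∈ P.carrier, g (f x) = x) ∧ ∀ y ∈ Q.carrier, f (g y) = y

/-- The ambient type of the free completion: formal copies `base x` of the
original elements together with formal pairs `node`. -/
inductive FC (α : Type u) : Type u
  | base : α → FC α
  | node : List (FC α) → FC α → FC α

namespace FC

variable {α : Type u}

open scoped Classical

/-- A canonical list enumerating a finite set. -/
noncomputable def listOf (s : Set (FC α)) : List (FC α) :=
  if h : s.Finite then h.toFinset.toList else []

/-- The copy of the original carrier inside `FC α`. -/
def baseSet (P : PrePair α) : Set (FC α) := base '' P.carrier

/-- `(a, x)` is the copy of a pair in the domain of `j`. -/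
def IsOldDom (P : PrePair α) (a : Set (FC α)) (x : FC α) : Prop :=
  ∃ (a₀ : Set α) (x₀ : α), a = base '' a₀ ∧ x = base x₀ ∧ (P.j (a₀, x₀)).isSome

/-- The increasing stages `Aₙ` of the free completion:
`A₀ = A` and `A_{n+1} = A ∪ ((Aₙ* × Aₙ) ∖ dom j)`. -/
def stage (P : PrePair α) : ℕ → Set (FC α)
  | 0 => baseSet P
  | n + 1 => baseSet P ∪
      {t | ∃ (a : Set (FC α)) (x : FC α), a.Finite ∧ a ⊆ stage P n ∧
        x ∈ stage P n ∧ ¬ IsOldDom P a x ∧ t = node (listOf a) x}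

/-- The carrier `Ā = ⋃ₙ Aₙ` of the free completion. -/
def compCarrier (P : PrePair α) : Set (FC α) := ⋃ n, stage P n

/-- `y` is the copy of the old value `j (a₀, x₀)`, where `(a, x)` is the copy
of `(a₀, x₀) ∈ dom j`. -/
def OldVal (P : PrePair α) (a : Set (FC α)) (x y : FC α) : Prop :=
  ∃ (a₀ : Set α) (x₀ y₀ : α), a = base '' a₀ ∧ x = base x₀ ∧
    P.j (a₀, x₀) = some y₀ ∧ y = base y₀

/-- The total injection `j̄` of the free completion: it extends `j` and sends
every other pair `(a, α)` of the completion to (the formal copy of) itself. -/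
noncomputable def jbar (P : PrePair α) (p : Set (FC α) × FC α) : Option (FC α) :=
  if p.1.Finite ∧ p.1 ⊆ compCarrier P ∧ p.2 ∈ compCarrier P then
    if h : ∃ y, OldVal P p.1 p.2 y then some h.choose
    else some (node (listOf p.1) p.2)
  else none

end FC

/-- The free completion `Ā` of a partial pair `A`, as a total pair on `FC α`. -/
noncomputable def completion {α : Type u} (P : PrePair α) : PrePair (FC α) :=
  ⟨FC.compCarrier P, FC.jbar P⟩

/-- The fixed effective encoding of finite subsets of `ℕ`. -/
def encF (s : Finset ℕ) : ℕ := s.sum fun i => 2 ^ i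

/-- A partial pair on `ℕ` whose carrier is a decidable set and whose map `j` is
partial recursive with decidable domain (under the fixed effective encoding of
finite sets and pairs). -/
def ConcreteWE (Q : PrePair ℕ) : Prop :=
  ComputablePred (· ∈ Q.carrier) ∧
  ∃ f : ℕ →. ℕ, Nat.Partrec f ∧ ComputablePred (fun n => (f n).Dom) ∧
    ∀ (a : Finset ℕ) (x y : ℕ), Q.j (↑a, x) = some y ↔ y ∈ f (Nat.pair (encF a) x)

/-- The range of `j` is decidable. -/
def ConcreteRange (Q : PrePair ℕ) : Prop :=
  ComputablePred fun y => ∃ p, Q.j p = some y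

/-- Weakly effective partial pairs: partial pairs isomorphic to a partial pair
on `ℕ` with decidable carrier whose `j` is partial recursive with decidable
domain. -/
def WeaklyEffective {α : Type u} (P : PrePair α) : Prop :=
  ∃ Q : PrePair ℕ, ConcreteWE Q ∧ ∃ f : α → ℕ, IsIso P Q f

/-- Effective partial pairs: weakly effective via a pair whose `j` moreover has
decidable range. -/
def EffectivePair {α : Type u} (P : PrePair α) : Prop :=
  ∃ Q : PrePair ℕ, ConcreteWE Q ∧ ConcreteRange Q ∧ ∃ f : α → ℕ, IsIso P Q f

/-- Effective total pairs: total pairs isomorphic to some `(ℕ, ℓ)` with `ℓ`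
total recursive, injective and with decidable range. -/
def EffectiveTotalPair {α : Type u} (P : PrePair α) : Prop :=
  ∃ Q : PrePair ℕ, Q.carrier = Set.univ ∧
    (∃ f : ℕ → ℕ, Computable f ∧ Function.Injective f ∧
      ComputablePred (fun y => ∃ n, f n = y) ∧
      ∀ (a : Finset ℕ) (x : ℕ), Q.j (↑a, x) = some (f (Nat.pair (encF a) x))) ∧
    ∃ h : α → ℕ, IsIso P Q h

/-!
Suppose the non-empty β-co-r.e. sets `V i` had empty intersection and pick `P i ∈ V i`. Then the
r.e. complements `(V i)ᶜ` cover `Λ`, so a λ-term `G` applied to the numeral of a code `m` can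
dovetail their enumerations until it finds an `i` such that `m` is the code of a term outside
`V i`, and then return `P i`. Kleene's second recursion theorem gives `M =β G ⌜code M⌝`; the search
finds `i` with `M ∉ V i`, while `M =β P i ∈ V i`, contradicting the β-closure of `V i`.

Writing `G` requires λ-definability of primitive recursive functions on Church numerals. All of it
reduces to iteration `⌜n⌝ F X =β Fⁿ X`, even `Nat.unpair n`, which is the `n`-th iterate of a simple
successor function on `ℕ × ℕ`; the unbounded search is a loop built with a fixed-point combinator.
-/

infixl:100 " ⬝ " => Term.app
infix:50 " =β " => Term.BetaConv

namespace Term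

theorem lift_lift : ∀ (M : Term) {d e : ℕ}, d ≤ e →
    lift d (lift e M) = lift (e + 1) (lift d M)
  | var n, d, e, h => by
    simp only [lift]; split_ifs <;> simp only [lift] <;> split_ifs <;> grind
  | app M N, _, _, h => by simp only [lift, lift_lift M h, lift_lift N h]
  | lam M, _, _, h => by simp only [lift, lift_lift M (Nat.succ_le_succ h)]

@[simp] theorem subst_lift : ∀ (M : Term) (k : ℕ) (N : Term), subst (lift k M) k N = M
  | var n, k, N => by
    simp only [lift]; split_ifs <;> simp only [subst] <;> split_ifs <;> grind
  | app M M', k, N => by simp only [lift, subst, subst_lift]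
  | lam M, k, N => by simp only [lift, subst, subst_lift]

theorem lift_subst : ∀ (M : Term) {d k : ℕ} (N : Term), d ≤ k →
    lift d (subst M k N) = subst (lift d M) (k + 1) (lift d N)
  | var n, d, k, N, h => by
    simp only [subst]; split_ifs <;> simp only [lift] <;> split_ifs <;>
      simp only [subst] <;> split_ifs <;> grind
  | app M M', _, _, N, h => by simp only [subst, lift, lift_subst M N h, lift_subst M' N h]
  | lam M, _, _, N, h => by
    simp only [subst, lift, lift_subst M (lift 0 N) (Nat.succ_le_succ h),
      lift_lift N (Nat.zero_le _)]

@[simp] theorem subst_lift_zero_succ (M N : Term) (k : ℕ) :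
    subst (lift 0 M) (k + 1) (lift 0 N) = lift 0 (subst M k N) :=
  (lift_subst M N (Nat.zero_le k)).symm

theorem lift_iterate_app (F X : Term) (d n : ℕ) :
    lift d ((app F)^[n] X) = (app (lift d F))^[n] (lift d X) := by
  induction n with
  | zero => rfl
  | succ n ih => simp only [Function.iterate_succ_apply', lift, ih]

theorem subst_iterate_app (F X N : Term) (k n : ℕ) :
    subst ((app F)^[n] X) k N = (app (subst F k N))^[n] (subst X k N) := by
  induction n with
  | zero => rfl
  | succ n ih => simp only [Function.iterate_succ_apply', subst, ih]

instance : Trans BetaConv BetaConv BetaConv := ⟨BetaConv.trans⟩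

namespace BetaConv

theorem of_eq {M N : Term} (h : M = N) : M =β N := h ▸ refl M

theorem app_left {M M' : Term} (N : Term) (h : M =β M') : M ⬝ N =β M' ⬝ N := by
  induction h with
  | of h => exact of (Step.appL N h)
  | refl => exact refl _
  | symm _ ih => exact ih.symm
  | trans _ _ ih ih' => exact ih.trans ih'

theorem app_right (M : Term) {N N' : Term} (h : N =β N') : M ⬝ N =β M ⬝ N' := by
  induction h with
  | of h => exact of (Step.appR M h)
  | refl => exact refl _
  | symm _ ih => exact ih.symm
  | trans _ _ ih ih' => exact ih.trans ih'

theorem app_congr {M M' N N' : Term} (hM : M =β M') (hN : N =β N') : M ⬝ N =β M' ⬝ N' :=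
  (hM.app_left N).trans (hN.app_right M')

theorem abs {M M' : Term} (h : M =β M') : lam M =β lam M' := by
  induction h with
  | of h => exact of (Step.abs h)
  | refl => exact refl _
  | symm _ ih => exact ih.symm
  | trans _ _ ih ih' => exact ih.trans ih'

theorem beta (M N : Term) : lam M ⬝ N =β subst M 0 N := of (Step.beta M N)

theorem beta₂ (M N₁ N₂ : Term) :
    lam (lam M) ⬝ N₁ ⬝ N₂ =β subst (subst M 1 (lift 0 N₁)) 0 N₂ :=
  ((beta _ N₁).app_left N₂).trans (beta _ N₂)

theorem beta₃ (M N₁ N₂ N₃ : Term) :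
    lam (lam (lam M)) ⬝ N₁ ⬝ N₂ ⬝ N₃ =β
      subst (subst (subst M 2 (lift 0 (lift 0 N₁))) 1 (lift 0 N₂)) 0 N₃ :=
  ((beta₂ _ N₁ N₂).app_left N₃).trans (beta _ N₃)

end BetaConv

open BetaConv

def K : Term := lam (lam (var 1))
def S : Term := lam (lam (lam (var 2 ⬝ var 0 ⬝ (var 1 ⬝ var 0))))
def B : Term := lam (lam (lam (var 2 ⬝ (var 1 ⬝ var 0))))
def C : Term := lam (lam (lam (var 2 ⬝ var 0 ⬝ var 1)))

theorem Idt_app (M : Term) : Idt ⬝ M =β M := beta _ M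

theorem K_app (M N : Term) : K ⬝ M ⬝ N =β M :=
  (beta₂ _ M N).trans (of_eq (by simp [subst]))

theorem S_app (M N P : Term) : S ⬝ M ⬝ N ⬝ P =β M ⬝ P ⬝ (N ⬝ P) :=
  (beta₃ _ M N P).trans (of_eq (by simp [subst]))

theorem B_app (M N P : Term) : B ⬝ M ⬝ N ⬝ P =β M ⬝ (N ⬝ P) :=
  (beta₃ _ M N P).trans (of_eq (by simp [subst]))

theorem C_app (M N P : Term) : C ⬝ M ⬝ N ⬝ P =β M ⬝ P ⬝ N :=
  (beta₃ _ M N P).trans (of_eq (by simp [subst]))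

/-- Turing's fixed-point combinator. -/
def Θ : Term :=
  lam (lam (var 0 ⬝ (var 1 ⬝ var 1 ⬝ var 0))) ⬝ lam (lam (var 0 ⬝ (var 1 ⬝ var 1 ⬝ var 0)))

theorem Θ_app (F : Term) : Θ ⬝ F =β F ⬝ (Θ ⬝ F) :=
  (beta₂ _ _ F).trans (of_eq (by simp [subst, Θ]))

def church (n : ℕ) : Term := lam (lam ((app (var 1))^[n] (var 0)))

theorem church_app (n : ℕ) (F X : Term) : church n ⬝ F ⬝ X =β (app F)^[n] X :=
  (beta₂ _ F X).trans (of_eq (by simp [subst, subst_iterate_app]))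

@[simp] theorem lift_church (d n : ℕ) : lift d (church n) = church n := by
  simp [church, lift, lift_iterate_app]

@[simp] theorem subst_church (n k : ℕ) (N : Term) : subst (church n) k N = church n := by
  conv_lhs => rw [← lift_church k n]
  exact subst_lift _ _ _

def SUCC : Term := lam (lam (lam (var 1 ⬝ (var 2 ⬝ var 1 ⬝ var 0))))

theorem SUCC_church (n : ℕ) : SUCC ⬝ church n =β church (n + 1) :=
  calc SUCC ⬝ church n =β lam (lam (var 1 ⬝ (church n ⬝ var 1 ⬝ var 0))) :=
        (beta _ _).trans (of_eq (by simp [subst]))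
    _ =β lam (lam (var 1 ⬝ (app (var 1))^[n] (var 0))) := abs (abs (app_right _ (church_app ..)))
    _ =β church (n + 1) := of_eq (by simp [church, Function.iterate_succ_apply'])

def PAIR : Term := lam (lam (lam (var 0 ⬝ var 2 ⬝ var 1)))
def FST : Term := lam (var 0 ⬝ K)
def SND : Term := lam (var 0 ⬝ (K ⬝ Idt))

theorem PAIR_app (M N P : Term) : PAIR ⬝ M ⬝ N ⬝ P =β P ⬝ M ⬝ N :=
  (beta₃ _ M N P).trans (of_eq (by simp [subst]))

theorem FST_PAIR (M N : Term) : FST ⬝ (PAIR ⬝ M ⬝ N) =β M :=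
  calc FST ⬝ (PAIR ⬝ M ⬝ N) =β PAIR ⬝ M ⬝ N ⬝ K := beta _ _
    _ =β K ⬝ M ⬝ N := PAIR_app M N K
    _ =β M := K_app M N

theorem SND_PAIR (M N : Term) : SND ⬝ (PAIR ⬝ M ⬝ N) =β N :=
  calc SND ⬝ (PAIR ⬝ M ⬝ N) =β PAIR ⬝ M ⬝ N ⬝ (K ⬝ Idt) := beta _ _
    _ =β K ⬝ Idt ⬝ M ⬝ N := PAIR_app M N _
    _ =β Idt ⬝ N := (K_app Idt M).app_left N
    _ =β N := Idt_app N

def IFZ : Term := lam (lam (lam (var 2 ⬝ lam (var 1) ⬝ var 1)))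

theorem IFZ_church (c : ℕ) (M N : Term) :
    IFZ ⬝ church c ⬝ M ⬝ N =β if c = 0 then M else N :=
  calc IFZ ⬝ church c ⬝ M ⬝ N =β church c ⬝ lam (lift 0 N) ⬝ M :=
        (beta₃ _ _ M N).trans (of_eq (by simp [subst]))
    _ =β (app (lam (lift 0 N)))^[c] M := church_app ..
    _ =β if c = 0 then M else N := by
      cases c with
      | zero => exact refl M
      | succ c => simpa [Function.iterate_succ_apply'] using beta (lift 0 N) _

def branch (P M N : Term) : Term := S ⬝ (S ⬝ (B ⬝ IFZ ⬝ P) ⬝ M) ⬝ N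

theorem branch_app (P M N X : Term) :
    branch P M N ⬝ X =β IFZ ⬝ (P ⬝ X) ⬝ (M ⬝ X) ⬝ (N ⬝ X) :=
  calc branch P M N ⬝ X =β S ⬝ (B ⬝ IFZ ⬝ P) ⬝ M ⬝ X ⬝ (N ⬝ X) := S_app _ _ _
    _ =β B ⬝ IFZ ⬝ P ⬝ X ⬝ (M ⬝ X) ⬝ (N ⬝ X) := app_left _ (S_app _ _ _)
    _ =β IFZ ⬝ (P ⬝ X) ⬝ (M ⬝ X) ⬝ (N ⬝ X) := app_left _ (app_left _ (B_app _ _ _))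

end Term

namespace Nat

def unpairSucc (p : ℕ × ℕ) : ℕ × ℕ :=
  if p.1 < p.2 then (if p.1 + 1 < p.2 then (p.1 + 1, p.2) else (p.2, 0))
  else if p.2 < p.1 then (p.1, p.2 + 1) else (0, p.1 + 1)

theorem unpair_succ (n : ℕ) : unpair (n + 1) = unpairSucc (unpair n) := by
  rcases hp : unpair n with ⟨a, b⟩
  have hn : pair a b = n := by rw [← pair_unpair n, hp]
  suffices pair (unpairSucc (a, b)).1 (unpairSucc (a, b)).2 = n + 1 by
    rw [← this, unpair_pair]
  subst hn
  simp only [unpairSucc, pair]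
  split_ifs <;> first | omega | nlinarith

end Nat

class ChurchEncodable (α : Type) where
  encode : α → Term

notation "⌜" a "⌝" => ChurchEncodable.encode a

instance : ChurchEncodable ℕ := ⟨church⟩

instance {α β : Type} [ChurchEncodable α] [ChurchEncodable β] : ChurchEncodable (α × β) :=
  ⟨fun p => PAIR ⬝ ⌜p.1⌝ ⬝ ⌜p.2⌝⟩

def LambdaDefinable {α β : Type} [ChurchEncodable α] [ChurchEncodable β] (f : α → β) : Prop :=
  ∃ F : Term, ∀ a, F ⬝ ⌜a⌝ =β ⌜f a⌝

namespace LambdaDefinable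

open Term BetaConv

variable {α β γ : Type} [ChurchEncodable α] [ChurchEncodable β] [ChurchEncodable γ]

theorem of_eq {f g : α → β} (hf : LambdaDefinable f) (h : ∀ a, f a = g a) :
    LambdaDefinable g :=
  funext h ▸ hf

protected theorem id : LambdaDefinable (id : α → α) := ⟨Idt, fun a => Idt_app ⌜a⌝⟩

theorem const (b : β) : LambdaDefinable fun _ : α => b := ⟨K ⬝ ⌜b⌝, fun a => K_app ⌜b⌝ ⌜a⌝⟩

theorem comp {g : β → γ} {f : α → β} (hg : LambdaDefinable g) (hf : LambdaDefinable f) :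
    LambdaDefinable fun a => g (f a) := by
  obtain ⟨G, hG⟩ := hg
  obtain ⟨F, hF⟩ := hf
  exact ⟨B ⬝ G ⬝ F, fun a => (B_app G F ⌜a⌝).trans ((app_right G (hF a)).trans (hG (f a)))⟩

theorem pair {f : α → β} {g : α → γ} (hf : LambdaDefinable f) (hg : LambdaDefinable g) :
    LambdaDefinable fun a => (f a, g a) := by
  obtain ⟨F, hF⟩ := hf
  obtain ⟨G, hG⟩ := hg
  refine ⟨S ⬝ (B ⬝ PAIR ⬝ F) ⬝ G, fun a => ?_⟩
  calc S ⬝ (B ⬝ PAIR ⬝ F) ⬝ G ⬝ ⌜a⌝ =β B ⬝ PAIR ⬝ F ⬝ ⌜a⌝ ⬝ (G ⬝ ⌜a⌝) := S_app _ _ _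
    _ =β PAIR ⬝ (F ⬝ ⌜a⌝) ⬝ (G ⬝ ⌜a⌝) := app_left _ (B_app _ _ _)
    _ =β PAIR ⬝ ⌜f a⌝ ⬝ ⌜g a⌝ := app_congr (app_right _ (hF a)) (hG a)

theorem fst : LambdaDefinable (Prod.fst : α × β → α) := ⟨FST, fun p => FST_PAIR ⌜p.1⌝ ⌜p.2⌝⟩

theorem snd : LambdaDefinable (Prod.snd : α × β → β) := ⟨SND, fun p => SND_PAIR ⌜p.1⌝ ⌜p.2⌝⟩

theorem succ : LambdaDefinable Nat.succ := ⟨SUCC, SUCC_church⟩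

theorem ite {c : α → ℕ} {f g : α → β} (hc : LambdaDefinable c) (hf : LambdaDefinable f)
    (hg : LambdaDefinable g) : LambdaDefinable fun a => if c a = 0 then f a else g a := by
  obtain ⟨P, hP⟩ := hc
  obtain ⟨F, hF⟩ := hf
  obtain ⟨G, hG⟩ := hg
  refine ⟨branch P F G, fun a => ?_⟩
  calc branch P F G ⬝ ⌜a⌝ =β IFZ ⬝ (P ⬝ ⌜a⌝) ⬝ (F ⬝ ⌜a⌝) ⬝ (G ⬝ ⌜a⌝) := branch_app _ _ _ _
    _ =β IFZ ⬝ ⌜c a⌝ ⬝ ⌜f a⌝ ⬝ ⌜g a⌝ := app_congr (app_congr (app_right _ (hP a)) (hF a)) (hG a)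
    _ =β ⌜if c a = 0 then f a else g a⌝ := by
      rw [apply_ite (ChurchEncodable.encode (α := β))]
      exact IFZ_church _ _ _

theorem iterate_app_conv {F : Term} {f : α → α} (hF : ∀ a, F ⬝ ⌜a⌝ =β ⌜f a⌝) (n : ℕ) (a : α) :
    (app F)^[n] ⌜a⌝ =β ⌜f^[n] a⌝ := by
  induction n with
  | zero => exact refl _
  | succ n ih =>
    rw [Function.iterate_succ_apply', Function.iterate_succ_apply']
    exact (app_right F ih).trans (hF _)

theorem iterate {f : α → α} (hf : LambdaDefinable f) :
    LambdaDefinable fun p : ℕ × α => f^[p.1] p.2 := by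
  obtain ⟨F, hF⟩ := hf
  refine ⟨S ⬝ (C ⬝ FST ⬝ F) ⬝ SND, fun p => ?_⟩
  calc S ⬝ (C ⬝ FST ⬝ F) ⬝ SND ⬝ ⌜p⌝ =β C ⬝ FST ⬝ F ⬝ ⌜p⌝ ⬝ (SND ⬝ ⌜p⌝) := S_app _ _ _
    _ =β FST ⬝ ⌜p⌝ ⬝ F ⬝ (SND ⬝ ⌜p⌝) := app_left _ (C_app _ _ _)
    _ =β church p.1 ⬝ F ⬝ ⌜p.2⌝ := app_congr (app_left _ (FST_PAIR _ _)) (SND_PAIR _ _)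
    _ =β (app F)^[p.1] ⌜p.2⌝ := church_app _ _ _
    _ =β ⌜f^[p.1] p.2⌝ := iterate_app_conv hF _ _

theorem pred : LambdaDefinable Nat.pred := by
  have key : ∀ n, (fun q : ℕ × ℕ => (q.2, q.2 + 1))^[n] (0, 0) = (n.pred, n) := by
    intro n
    induction n with
    | zero => rfl
    | succ n ih => rw [Function.iterate_succ_apply', ih]; rfl
  exact (fst.comp ((iterate (snd.pair (succ.comp snd))).comp
    (LambdaDefinable.id.pair (const (0, 0))))).of_eq fun n => by simp [key]

theorem nat_sub : LambdaDefinable fun p : ℕ × ℕ => p.1 - p.2 :=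
  ((iterate pred).comp (snd.pair fst)).of_eq fun p => Nat.pred_iterate p.1 p.2

theorem nat_add : LambdaDefinable fun p : ℕ × ℕ => p.1 + p.2 :=
  ((iterate succ).comp (snd.pair fst)).of_eq fun p => Nat.succ_iterate p.1 p.2

theorem nat_mul : LambdaDefinable fun p : ℕ × ℕ => p.1 * p.2 := by
  have key : ∀ a b, (fun q : ℕ × ℕ => (q.1, q.1 + q.2))^[a] (b, 0) = (b, a * b) := by
    intro a b
    induction a with
    | zero => simp
    | succ a ih => rw [Function.iterate_succ_apply', ih, Nat.succ_mul, add_comm]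
  exact (snd.comp ((iterate (fst.pair nat_add)).comp (fst.pair (snd.pair (const 0))))).of_eq
    fun p => by simp [key]

theorem natPair : LambdaDefinable fun p : ℕ × ℕ => Nat.pair p.1 p.2 := by
  refine (ite (nat_sub.comp (snd.pair fst))
    (nat_add.comp ((nat_add.comp ((nat_mul.comp (fst.pair fst)).pair fst)).pair snd))
    (nat_add.comp ((nat_mul.comp (snd.pair snd)).pair fst))).of_eq fun p => ?_
  simp only [Nat.pair]
  split_ifs <;> omega

theorem unpair : LambdaDefinable Nat.unpair := by
  have hsucc : LambdaDefinable Nat.unpairSucc := by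
    refine (ite (nat_sub.comp (snd.pair fst))
      (ite (nat_sub.comp (fst.pair snd)) ((const 0).pair (succ.comp fst))
        (fst.pair (succ.comp snd)))
      (ite (nat_sub.comp (snd.pair (succ.comp fst))) (snd.pair (const 0))
        ((succ.comp fst).pair snd))).of_eq fun p => ?_
    simp only [Nat.unpairSucc]
    split_ifs <;> first | rfl | omega
  have key : ∀ n, Nat.unpairSucc^[n] (0, 0) = Nat.unpair n := by
    intro n
    induction n with
    | zero => rfl
    | succ n ih => rw [Function.iterate_succ_apply', ih, Nat.unpair_succ]
  exact ((iterate hsucc).comp (LambdaDefinable.id.pair (const (0, 0)))).of_eq key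

theorem natRec {f : α → β} {g : α × ℕ × β → β} (hf : LambdaDefinable f)
    (hg : LambdaDefinable g) :
    LambdaDefinable fun p : α × ℕ =>
      (Nat.rec (f p.1) (fun y IH => g (p.1, y, IH)) p.2 : β) := by
  let step (q : α × ℕ × β) : α × ℕ × β := (q.1, q.2.1 + 1, g q)
  have key : ∀ a n, step^[n] (a, 0, f a) =
      (a, n, (Nat.rec (f a) (fun y IH => g (a, y, IH)) n : β)) := by
    intro a n
    induction n with
    | zero => rfl
    | succ n ih => rw [Function.iterate_succ_apply', ih]
  have hstep : LambdaDefinable step := fst.pair ((succ.comp (fst.comp snd)).pair hg)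
  exact ((snd.comp snd).comp ((iterate hstep).comp
    (snd.pair (fst.pair ((const 0).pair (hf.comp fst)))))).of_eq fun p => by simp only [key]

theorem of_natPrimrec {f : ℕ → ℕ} (hf : Nat.Primrec f) : LambdaDefinable f := by
  induction hf with
  | zero => exact const 0
  | succ => exact succ
  | left => exact fst.comp unpair
  | right => exact snd.comp unpair
  | pair _ _ hf hg => exact natPair.comp (hf.pair hg)
  | comp _ _ hf hg => exact hf.comp hg
  | prec _ _ hf hg =>
    exact (natRec hf (hg.comp (natPair.comp (fst.pair (natPair.comp snd))))).comp unpair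

theorem of_primrec {f : ℕ → ℕ} (hf : Primrec f) : LambdaDefinable f :=
  of_natPrimrec (Primrec.nat_iff.1 hf)

theorem of_primrec₂ {f : ℕ × ℕ → ℕ} (hf : Primrec f) : LambdaDefinable f :=
  ((of_primrec (hf.comp Primrec.unpair)).comp natPair).of_eq fun p => by simp

end LambdaDefinable

open Term BetaConv

theorem LambdaDefinable.exists_find {α : Type} [ChurchEncodable α] {t : α × ℕ → ℕ}
    (ht : LambdaDefinable t) :
    ∃ F : Term, ∀ a s, t (a, s) ≠ 0 → (∀ s' < s, t (a, s') = 0) → F ⬝ ⌜a⌝ =β ⌜s⌝ := by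
  obtain ⟨T, hT⟩ := ht
  obtain ⟨N, hN⟩ := fst.pair (succ.comp snd) (α := α × ℕ)
  obtain ⟨Z, hZ⟩ := LambdaDefinable.id.pair (const 0) (α := α)
  obtain ⟨G, hG⟩ : ∃ G : Term, ∀ R, G ⬝ R =β branch T (B ⬝ R ⬝ N) SND := by
    refine ⟨B ⬝ (B ⬝ (C ⬝ S ⬝ SND) ⬝ (S ⬝ (B ⬝ IFZ ⬝ T))) ⬝ (C ⬝ B ⬝ N), fun R => ?_⟩
    calc _ =β B ⬝ (C ⬝ S ⬝ SND) ⬝ (S ⬝ (B ⬝ IFZ ⬝ T)) ⬝ (C ⬝ B ⬝ N ⬝ R) := B_app _ _ _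
      _ =β C ⬝ S ⬝ SND ⬝ (S ⬝ (B ⬝ IFZ ⬝ T) ⬝ (C ⬝ B ⬝ N ⬝ R)) := B_app _ _ _
      _ =β S ⬝ (S ⬝ (B ⬝ IFZ ⬝ T) ⬝ (C ⬝ B ⬝ N ⬝ R)) ⬝ SND := C_app _ _ _
      _ =β branch T (B ⬝ R ⬝ N) SND := app_left _ (app_right _ (app_right _ (C_app _ _ _)))
  set H := Θ ⬝ G
  have step : ∀ a s, H ⬝ ⌜(a, s)⌝ =β if t (a, s) = 0 then H ⬝ ⌜(a, s + 1)⌝ else ⌜s⌝ := by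
    intro a s
    calc H ⬝ ⌜(a, s)⌝ =β branch T (B ⬝ H ⬝ N) SND ⬝ ⌜(a, s)⌝ :=
          app_left _ ((Θ_app G).trans (hG H))
      _ =β IFZ ⬝ (T ⬝ ⌜(a, s)⌝) ⬝ (B ⬝ H ⬝ N ⬝ ⌜(a, s)⌝) ⬝ (SND ⬝ ⌜(a, s)⌝) := branch_app ..
      _ =β IFZ ⬝ ⌜t (a, s)⌝ ⬝ (H ⬝ ⌜(a, s + 1)⌝) ⬝ ⌜s⌝ :=
        app_congr (app_congr (app_right _ (hT _)) ((B_app _ _ _).trans (app_right _ (hN _))))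
          (SND_PAIR _ _)
      _ =β _ := IFZ_church ..
  refine ⟨B ⬝ H ⬝ Z, fun a s hs hmin => ?_⟩
  have search : ∀ k ≤ s, H ⬝ ⌜(a, s - k)⌝ =β ⌜s⌝ := by
    intro k
    induction k with
    | zero => intro _; simpa [hs] using step a s
    | succ k ih =>
      intro hk
      have h := step a (s - (k + 1))
      rw [if_pos (hmin _ (by omega)), show s - (k + 1) + 1 = s - k by omega] at h
      exact h.trans (ih (by omega))
  calc B ⬝ H ⬝ Z ⬝ ⌜a⌝ =β H ⬝ ⌜(a, 0)⌝ := (B_app _ _ _).trans (app_right _ (hZ a))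
    _ =β ⌜s⌝ := by simpa using search s le_rfl

namespace Term

theorem exists_select : ∀ (n : ℕ) (P : Fin n → Term),
    ∃ SEL : Term, ∀ i : Fin n, SEL ⬝ ⌜(i : ℕ)⌝ =β P i
  | 0, _ => ⟨Idt, fun i => i.elim0⟩
  | n + 1, P => by
    obtain ⟨SEL, hSEL⟩ := exists_select n (fun i => P i.succ)
    obtain ⟨PRED, hPRED⟩ := LambdaDefinable.pred
    refine ⟨branch Idt (K ⬝ P 0) (B ⬝ SEL ⬝ PRED), fun i => ?_⟩
    calc _ =β IFZ ⬝ (Idt ⬝ ⌜(i : ℕ)⌝) ⬝ (K ⬝ P 0 ⬝ ⌜(i : ℕ)⌝) ⬝ (B ⬝ SEL ⬝ PRED ⬝ ⌜(i : ℕ)⌝) :=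
          branch_app ..
      _ =β IFZ ⬝ ⌜(i : ℕ)⌝ ⬝ P 0 ⬝ (SEL ⬝ ⌜(i : ℕ).pred⌝) :=
          app_congr (app_congr (app_right _ (Idt_app _)) (K_app _ _))
            ((B_app _ _ _).trans (app_right _ (hPRED _)))
      _ =β if (i : ℕ) = 0 then P 0 else SEL ⬝ ⌜(i : ℕ).pred⌝ := IFZ_church ..
      _ =β P i := by
          induction i using Fin.cases with
          | zero => exact refl _
          | succ i => exact hSEL i

theorem code_church (n : ℕ) :
    code (church n) = 3 * (3 * ((fun c => 3 * Nat.pair 3 c + 1)^[n] 0) + 2) + 2 := by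
  suffices ∀ n, code ((app (var 1))^[n] (var 0)) = (fun c => 3 * Nat.pair 3 c + 1)^[n] 0 by
    simp [church, code, this]
  intro n
  induction n with
  | zero => rfl
  | succ n ih => rw [Function.iterate_succ_apply', Function.iterate_succ_apply', ← ih]; rfl

theorem primrec_code_church : Primrec fun n => code (church n) := by
  simp only [code_church]
  have hstep : Primrec₂ fun (_ : ℕ) c => 3 * Nat.pair 3 c + 1 :=
    Primrec.nat_add.comp (Primrec.nat_mul.comp (Primrec.const 3)
      (Primrec₂.natPair.comp (Primrec.const 3) Primrec.snd)) (Primrec.const 1)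
  have hiter := Primrec.nat_iterate Primrec.id (Primrec.const 0) hstep
  exact Primrec.nat_add.comp (Primrec.nat_mul.comp (Primrec.const 3)
    (Primrec.nat_add.comp (Primrec.nat_mul.comp (Primrec.const 3) hiter) (Primrec.const 2)))
    (Primrec.const 2)

/-- Kleene's second recursion theorem. -/
theorem exists_conv_app_code (F : Term) : ∃ M : Term, M =β F ⬝ ⌜code M⌝ := by
  obtain ⟨Q, hQ⟩ := LambdaDefinable.of_primrec (f := fun c => 3 * Nat.pair c (code (church c)) + 1)
    (Primrec.nat_add.comp (Primrec.nat_mul.comp (Primrec.const 3)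
      (Primrec₂.natPair.comp Primrec.id primrec_code_church)) (Primrec.const 1))
  -- `W := B F Q` sends `⌜code X⌝` to `F ⌜code (X ⌜code X⌝)⌝`; take `M := W ⌜code W⌝`
  exact ⟨B ⬝ F ⬝ Q ⬝ church (code (B ⬝ F ⬝ Q)), (B_app _ _ _).trans (app_right F (hQ _))⟩

theorem code_injective : Function.Injective code := by
  intro M N h
  induction M generalizing N with
  | var m => cases N <;> simp only [code, var.injEq] at h ⊢ <;> omega
  | app M₁ M₂ ih₁ ih₂ =>
    cases N with
    | app N₁ N₂ =>
      simp only [code] at h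
      obtain ⟨h₁, h₂⟩ :=
        Nat.pair_eq_pair.1 (by omega : Nat.pair (code M₁) (code M₂) = Nat.pair (code N₁) (code N₂))
      rw [ih₁ h₁, ih₂ h₂]
    | _ => simp only [code] at h; omega
  | lam M ih =>
    cases N with
    | lam N => simp only [code] at h; rw [ih (by omega : code M = code N)]
    | _ => simp only [code] at h; omega

end Term

open Nat.Partrec (Code)
open Nat.Partrec.Code

theorem REPred.exists_code_evaln {p : ℕ → Prop} (hp : REPred p) :
    ∃ c : Code, ∀ m, p m ↔ ∃ k, (evaln k c m).isSome := by
  obtain ⟨c, hc⟩ := exists_code.1 (Partrec.nat_iff.1 (hp.map (Computable.const 0).to₂))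
  refine ⟨c, fun m => ?_⟩
  have hdom : p m ↔ (eval c m).Dom := by rw [hc]; exact ⟨fun h => ⟨h, trivial⟩, fun h => h.1⟩
  rw [hdom, Part.dom_iff_mem]
  simp only [evaln_complete, Option.isSome_iff_exists, Option.mem_def]
  exact exists_comm

theorem exists_select_of_rePred {n : ℕ} (p : Fin n → ℕ → Prop) (hp : ∀ i, REPred (p i))
    (P : Fin n → Term) : ∃ G : Term, ∀ m, (∃ i, p i m) → ∃ i, p i m ∧ G ⬝ ⌜m⌝ =β P i := by
  choose c hc using fun i => (hp i).exists_code_evaln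
  let t : ℕ × ℕ → ℕ := fun q =>
    bif decide (q.2.unpair.1 < n) &&
      (evaln q.2.unpair.2 ((List.ofFn c).getD q.2.unpair.1 Code.zero) q.1).isSome then 1 else 0
  have ht : Primrec t := by
    have hs : Primrec fun q : ℕ × ℕ => q.2.unpair := Primrec.unpair.comp Primrec.snd
    refine Primrec.cond (Primrec.and.comp
      (Primrec.nat_lt.comp (Primrec.fst.comp hs) (Primrec.const n)).decide
      (Primrec.option_isSome.comp (primrec_evaln.comp (((Primrec.snd.comp hs).pair
        ((Primrec.list_getD Code.zero).comp (Primrec.const (List.ofFn c))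
          (Primrec.fst.comp hs))).pair Primrec.fst)))) (Primrec.const 1) (Primrec.const 0)
  have ht_ne_zero : ∀ m s, t (m, s) ≠ 0 ↔
      ∃ i : Fin n, i = s.unpair.1 ∧ (evaln s.unpair.2 (c i) m).isSome := by
    intro m s
    simp only [t, ne_eq, List.getD_eq_getElem?_getD, List.getElem?_ofFn]
    constructor
    · intro h
      by_cases hlt : s.unpair.1 < n
      · refine ⟨⟨_, hlt⟩, rfl, ?_⟩
        simp only [hlt, decide_true, Bool.true_and, dite_true, Option.getD_some] at h
        cases hsome : (evaln _ _ m).isSome <;> simp_all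
      · simp [hlt] at h
    · rintro ⟨i, hi, hev⟩
      simp [← hi, hev]
  obtain ⟨FIND, hFIND⟩ := (LambdaDefinable.of_primrec₂ ht).exists_find
  obtain ⟨IDX, hIDX⟩ := LambdaDefinable.fst.comp LambdaDefinable.unpair
  obtain ⟨SEL, hSEL⟩ := exists_select n P
  refine ⟨B ⬝ SEL ⬝ (B ⬝ IDX ⬝ FIND), fun m hm => ?_⟩
  have hex : ∃ s, t (m, s) ≠ 0 := by
    obtain ⟨i, hi⟩ := hm
    obtain ⟨k, hk⟩ := (hc i m).1 hi
    exact ⟨Nat.pair i k, (ht_ne_zero m _).2 ⟨i, by simp, by simpa using hk⟩⟩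
  obtain ⟨i, hi, hev⟩ := (ht_ne_zero m _).1 (Nat.find_spec hex)
  refine ⟨i, (hc i m).2 ⟨_, hev⟩, ?_⟩
  calc B ⬝ SEL ⬝ (B ⬝ IDX ⬝ FIND) ⬝ ⌜m⌝ =β SEL ⬝ (IDX ⬝ (FIND ⬝ ⌜m⌝)) :=
        (B_app _ _ _).trans (app_right _ (B_app _ _ _))
    _ =β SEL ⬝ ⌜(i : ℕ)⌝ := by
        refine app_right _ ((app_right _ (hFIND m _ (Nat.find_spec hex)
          fun s hs => not_not.1 (Nat.find_min hex hs))).trans ?_)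
        simpa [hi] using hIDX (Nat.find hex)
    _ =β P i := hSEL i

/-- **Visser.** The family of all non-empty β-co-r.e. subsets of
Λ has the finite intersection property. -/
theorem visser_fip (n : ℕ) (V : Fin n → Set Term)
    (hne : ∀ i, (V i).Nonempty) (hco : ∀ i, BetaCoRe (V i)) :
    (⋂ i, V i).Nonempty := by
  by_contra hempty
  choose P hP using hne
  obtain ⟨G, hG⟩ := exists_select_of_rePred (fun i m => ∃ M ∈ (V i)ᶜ, code M = m)
    (fun i => (hco i).2) P
  obtain ⟨M, hM⟩ := exists_conv_app_code G
  have hout : ∃ i, M ∉ V i := by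
    by_contra! h
    exact hempty ⟨M, Set.mem_iInter.2 h⟩
  obtain ⟨i, ⟨M', hM', hcode⟩, hconv⟩ := hG (code M) (hout.imp fun i hi => ⟨M, hi, rfl⟩)
  rw [code_injective hcode] at hM'
  exact hM' ((hco i).1 (P i) M (hP i) (hM.trans hconv).symm)
end

section
/- Let M be a λ-term, A a partial pair, ρ an environment with values in P(A), and suppose α ∈ ⟦M⟧^A_ρ. Then there exists a finite subpair B ⊑ A such that α ∈ ⟦M⟧^B_{ρ∩B}, where (ρ∩B)(x) = ρ(x) ∩ B for every variable x. -/
universe u v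

open Term

/-!
By induction on `M`, a membership `α ∈ ⟦M⟧^A_ρ` is witnessed by finitely many elements of `A`
and finitely many instances of `j`, which generate a finite subpair. Finite subpairs of `A` are
directed: the union of two of them, with the union of the graphs of their `j`'s, is again a
partial pair because `j_A` is injective. Since interpretation is monotone in the pair, the
witnesses for the subterms can all be collected into one finite subpair.
-/

namespace PrePair

variable {α : Type u}

theorem Subpair.refl (B : PrePair α) : B.Subpair B :=
  ⟨subset_rfl, fun _ _ h => h⟩

theorem Subpair.trans {B C D : PrePair α} (hBC : B.Subpair C) (hCD : C.Subpair D) :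
    B.Subpair D :=
  ⟨hBC.1.trans hCD.1, fun p y h => hCD.2 p y (hBC.2 p y h)⟩

def FiniteSubpair (B A : PrePair α) : Prop :=
  B.Subpair A ∧ B.carrier.Finite ∧ B.Valid

def point (x : α) : PrePair α := ⟨{x}, fun _ => none⟩

open Classical in
noncomputable def edge (a : Set α) (x y : α) : PrePair α :=
  ⟨insert x (insert y a), fun p => if p = (a, x) then some y else none⟩

def join (B C : PrePair α) : PrePair α :=
  ⟨B.carrier ∪ C.carrier, fun p => (B.j p).or (C.j p)⟩

variable {A B C : PrePair α}

theorem finiteSubpair_point {x : α} (hx : x ∈ A.carrier) : (point x).FiniteSubpair A :=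
  ⟨⟨Set.singleton_subset_iff.2 hx, fun _ _ h => by simp [point] at h⟩,
    Set.finite_singleton x, Set.singleton_nonempty x, fun _ _ _ h => by simp [point] at h,
    fun _ _ _ h => by simp [point] at h⟩

theorem finiteSubpair_edge (hA : A.Valid) {a : Set α} {x y : α} (h : A.j (a, x) = some y) :
    (edge a x y).FiniteSubpair A := by
  obtain ⟨ha, haA, hxA, hyA⟩ := hA.2.1 a x y h
  have hj : ∀ p z, (edge a x y).j p = some z → p = (a, x) ∧ z = y := by
    intro p z hp
    by_cases hpa : p = (a, x) <;> simp_all [edge]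
  refine ⟨⟨Set.insert_subset hxA (Set.insert_subset hyA haA), ?_⟩,
    (ha.insert y).insert x, ⟨x, Set.mem_insert x _⟩, ?_, ?_⟩
  · intro p z hp
    obtain ⟨rfl, rfl⟩ := hj p z hp
    exact h
  · intro b w z hp
    obtain ⟨hbw, rfl⟩ := hj _ _ hp
    obtain ⟨rfl, rfl⟩ := Prod.ext_iff.1 hbw
    exact ⟨ha, fun t ht => Set.mem_insert_of_mem _ (Set.mem_insert_of_mem _ ht),
      Set.mem_insert _ _, Set.mem_insert_of_mem _ (Set.mem_insert _ _)⟩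
  · intro p q z hp hq
    rw [(hj p z hp).1, (hj q z hq).1]

theorem join_j_eq_some {p : Set α × α} {y : α}
    (h : (join B C).j p = some y) : B.j p = some y ∨ C.j p = some y := by
  simp only [join] at h
  cases hBp : B.j p <;> simp_all

theorem subpair_join_left : B.Subpair (join B C) :=
  ⟨Set.subset_union_left, fun p y h => by simp [join, h]⟩

theorem subpair_join_right (hB : B.Subpair A) (hC : C.Subpair A) : C.Subpair (join B C) := by
  refine ⟨Set.subset_union_right, fun p y h => ?_⟩
  cases hBp : B.j p with
  | none => simp [join, hBp, h]
  | some z =>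
    have : z = y := Option.some.inj ((hB.2 p z hBp).symm.trans (hC.2 p y h))
    simp [join, hBp, this]

theorem FiniteSubpair.join (hA : A.Valid) (hB : B.FiniteSubpair A) (hC : C.FiniteSubpair A) :
    (join B C).FiniteSubpair A := by
  refine ⟨⟨Set.union_subset hB.1.1 hC.1.1, fun p y h => ?_⟩, hB.2.1.union hC.2.1,
    hB.2.2.1.mono Set.subset_union_left, fun a x y h => ?_, fun p q y hp hq => ?_⟩
  · rcases join_j_eq_some h with h | h
    exacts [hB.1.2 p y h, hC.1.2 p y h]
  · rcases join_j_eq_some h with h | h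
    · obtain ⟨h₁, h₂, h₃, h₄⟩ := hB.2.2.2.1 a x y h
      exact ⟨h₁, h₂.trans Set.subset_union_left, Or.inl h₃, Or.inl h₄⟩
    · obtain ⟨h₁, h₂, h₃, h₄⟩ := hC.2.2.2.1 a x y h
      exact ⟨h₁, h₂.trans Set.subset_union_right, Or.inr h₃, Or.inr h₄⟩
  · have toA : ∀ {r}, (PrePair.join B C).j r = some y → A.j r = some y := fun h =>
      (join_j_eq_some h).elim (hB.1.2 _ _) (hC.1.2 _ _)
    exact hA.2.2 p q y (toA hp) (toA hq)

theorem FiniteSubpair.exists_upper_bound {ι : Type*} (hA : A.Valid) {s : Set ι}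
    (hs : s.Finite) {D : ι → PrePair α} (hD : ∀ i ∈ s, (D i).FiniteSubpair A)
    (hB : B.FiniteSubpair A) :
    ∃ C, C.FiniteSubpair A ∧ B.Subpair C ∧ ∀ i ∈ s, (D i).Subpair C := by
  induction s, hs using Set.Finite.induction_on with
  | empty => exact ⟨B, hB, Subpair.refl B, by simp⟩
  | @insert i s _ _ ih =>
    obtain ⟨C, hC, hBC, hsC⟩ := ih fun k hk => hD k (Set.mem_insert_of_mem i hk)
    have hDi := hD i (Set.mem_insert i s)
    refine ⟨PrePair.join C (D i), hC.join hA hDi, hBC.trans subpair_join_left, ?_⟩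
    rintro k (rfl | hk)
    exacts [subpair_join_right hC.1 hDi.1, (hsC k hk).trans subpair_join_left]

end PrePair

open PrePair

theorem interp_mono {α : Type u} {B B' : PrePair α} (h : B.Subpair B') :
    ∀ (M : Term) {ρ ρ' : ℕ → Set α}, (∀ n, ρ n ⊆ ρ' n) → interp B M ρ ⊆ interp B' M ρ'
  | Term.var n, _, _, hρ => hρ n
  | Term.app M N, _, _, hρ => by
      rintro x ⟨a, hfin, hsub, z, hj, hz⟩
      exact ⟨a, hfin, hsub.trans (interp_mono h N hρ), z, h.2 _ _ hj, interp_mono h M hρ hz⟩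
  | Term.lam M, _, _, hρ => by
      rintro x ⟨a, w, hfin, hj, hw⟩
      refine ⟨a, w, hfin, h.2 _ _ hj, interp_mono h M (fun n => ?_) hw⟩
      cases n
      exacts [subset_rfl, hρ _]

theorem interp_inter_carrier_mono {α : Type u} {B B' : PrePair α} (h : B.Subpair B')
    (M : Term) (ρ : ℕ → Set α) :
    interp B M (fun n => ρ n ∩ B.carrier) ⊆ interp B' M (fun n => ρ n ∩ B'.carrier) :=
  interp_mono h M fun _ => Set.inter_subset_inter_right _ h.1

theorem exists_finiteSubpair_mem_interp {α : Type u} {A : PrePair α} (hA : A.Valid)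
    (M : Term) {ρ : ℕ → Set α} (hρ : ∀ n, ρ n ⊆ A.carrier) {x : α} (hx : x ∈ interp A M ρ) :
    ∃ B : PrePair α, B.FiniteSubpair A ∧ x ∈ interp B M fun n => ρ n ∩ B.carrier := by
  induction M generalizing ρ x with
  | var n => exact ⟨point x, finiteSubpair_point (hρ n hx), ⟨hx, rfl⟩⟩
  | app M N ihM ihN =>
    obtain ⟨a, ha, haN, z, hj, hz⟩ := hx
    obtain ⟨B, hB, hzB⟩ := ihM hρ hz
    have hD : ∀ y ∈ a, ∃ D, D.FiniteSubpair A ∧ y ∈ interp D N fun n => ρ n ∩ D.carrier :=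
      fun y hy => ihN hρ (haN hy)
    have : Nonempty (PrePair α) := ⟨B⟩
    choose! D hD hyD using hD
    have hE := finiteSubpair_edge hA hj
    obtain ⟨C, hC, hBEC, hDC⟩ := FiniteSubpair.exists_upper_bound hA ha hD (hB.join hA hE)
    have hEC : (edge a x z).Subpair C := (subpair_join_right hB.1 hE.1).trans hBEC
    refine ⟨C, hC, a, ha, fun y hy => interp_inter_carrier_mono (hDC y hy) N ρ (hyD y hy), z,
      hEC.2 _ _ (by simp [edge]),
      interp_inter_carrier_mono (subpair_join_left.trans hBEC) M ρ hzB⟩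
  | lam M ihM =>
    obtain ⟨a, w, ha, hj, hw⟩ := hx
    have henv : ∀ n, envCons a ρ n ⊆ A.carrier
      | 0 => (hA.2.1 a w x hj).2.1
      | n + 1 => hρ n
    obtain ⟨B, hB, hwB⟩ := ihM henv hw
    have hE := finiteSubpair_edge hA hj
    refine ⟨join B (edge a w x), hB.join hA hE, a, w, ha,
      (subpair_join_right hB.1 hE.1).2 _ _ (by simp [edge]),
      interp_mono subpair_join_left M (fun n => ?_) hwB⟩
    cases n
    exacts [Set.inter_subset_left, Set.inter_subset_inter_right _ subpair_join_left.1]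

/-- Every element of the interpretation of a λ-term is already
in the interpretation with respect to a finite subpair (and the restricted
environment). -/
theorem exists_finite_subpair {α : Type u} (A : PrePair α) (hA : A.Valid)
    (ρ : ℕ → Set α) (hρ : ∀ n, ρ n ⊆ A.carrier) (M : Term) (x : α)
    (hx : x ∈ interp A M ρ) :
    ∃ B : PrePair α, PrePair.Subpair B A ∧ B.carrier.Finite ∧ B.Valid ∧
      x ∈ interp B M fun n => ρ n ∩ B.carrier := by
  obtain ⟨B, ⟨hBA, hfin, hB⟩, hxB⟩ := exists_finiteSubpair_mem_interp hA M hρ hx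
  exact ⟨B, hBA, hfin, hB, hxB⟩
end

section
/- Let φ : A → B be a morphism of partial pairs and ρ an environment with values in P(A). Then (i) φ⁺(⟦M⟧^A_ρ) ⊆ ⟦M⟧^B_{φ⁺∘ρ} for every λ-term M, where φ⁺ denotes taking the image under φ; and (ii) if φ is an isomorphism then φ⁺(⟦M⟧^A_ρ) = ⟦M⟧^B_{φ⁺∘ρ}. -/
universe u v

open Term

/-!
Part (i) is a structural induction on `M`, in which a morphism carries each witness
`j(a, α)` of an application or an abstraction to the witness `j(f⁺ a, f α)`.
For (ii), with `g` the inverse of `f`, part (i) for `g` gives the reverse inclusion,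
because `g ∘ f` is the identity on the carrier of `A`, which contains the values of `ρ`,
and `f ∘ g` is the identity on the carrier of `B`, which contains every interpretation.
-/

section

variable {α : Type u} {β : Type v} {P : PrePair α} {Q : PrePair β} {f : α → β}

lemma interp_subset_carrier (hP : P.Valid) {ρ : ℕ → Set α} (hρ : ∀ n, ρ n ⊆ P.carrier)
    (M : Term) : interp P M ρ ⊆ P.carrier := by
  cases M with
  | var n => exact hρ n
  | app M N =>
    rintro y ⟨a, -, -, z, hj, -⟩
    exact (hP.2.1 a y z hj).2.2.1
  | lam M =>
    rintro y ⟨a, x, -, hj, -⟩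
    exact (hP.2.1 a x y hj).2.2.2

lemma image_envCons (f : α → β) (a : Set α) (ρ : ℕ → Set α) :
    (fun n => f '' envCons a ρ n) = envCons (f '' a) fun n => f '' ρ n := by
  funext n
  cases n <;> rfl

lemma IsMorphism.image_interp_subset (hP : P.Valid) (hf : IsMorphism P Q f) (M : Term)
    (ρ : ℕ → Set α) : f '' interp P M ρ ⊆ interp Q M fun n => f '' ρ n := by
  induction M generalizing ρ with
  | var n => exact subset_rfl
  | app M N ihM ihN =>
    rintro _ ⟨y, ⟨a, ha, haN, z, hj, hzM⟩, rfl⟩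
    obtain ⟨-, haP, hyP, -⟩ := hP.2.1 a y z hj
    exact ⟨f '' a, ha.image f, (Set.image_mono haN).trans (ihN ρ), f z,
      hf.2 a y z haP hyP hj, ihM ρ ⟨z, hzM, rfl⟩⟩
  | lam M ih =>
    rintro _ ⟨y, ⟨a, x, ha, hj, hxM⟩, rfl⟩
    obtain ⟨-, haP, hxP, -⟩ := hP.2.1 a x y hj
    refine ⟨f '' a, f x, ha.image f, hf.2 a x y haP hxP hj, ?_⟩
    rw [← image_envCons]
    exact ih (envCons a ρ) ⟨x, hxM, rfl⟩

lemma IsIso.image_interp (hP : P.Valid) (hQ : Q.Valid) (hf : IsIso P Q f) {ρ : ℕ → Set α}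
    (hρ : ∀ n, ρ n ⊆ P.carrier) (M : Term) :
    f '' interp P M ρ = interp Q M fun n => f '' ρ n := by
  obtain ⟨hf, g, hg, hgf, hfg⟩ := hf
  set σ : ℕ → Set β := fun n => f '' ρ n
  have hσ : ∀ n, σ n ⊆ Q.carrier := fun n => hf.1.mono_left (hρ n) |>.image_subset
  have hgσ : (fun n => g '' σ n) = ρ := funext fun n =>
    (Set.LeftInvOn.mono hgf (hρ n)).image_image
  refine (hf.image_interp_subset hP M ρ).antisymm ?_
  calc interp Q M σ
      = f '' (g '' interp Q M σ) :=
        (Set.LeftInvOn.mono hfg (interp_subset_carrier hQ hσ M)).image_image.symm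
    _ ⊆ f '' interp P M ρ := by
        rw [← hgσ]
        exact Set.image_mono (hg.image_interp_subset hQ M σ)

end

/-- (i) The image of the interpretation under a morphism of
partial pairs is contained in the interpretation along the image environment;
(ii) for isomorphisms, equality holds. -/
theorem morphism_image_interp {α : Type u} {β : Type v}
    (P : PrePair α) (Q : PrePair β) (hP : P.Valid) (hQ : Q.Valid) (f : α → β)
    (ρ : ℕ → Set α) (hρ : ∀ n, ρ n ⊆ P.carrier) :
    (IsMorphism P Q f →
      ∀ M : Term, f '' interp P M ρ ⊆ interp Q M fun n => f '' ρ n) ∧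
    (IsIso P Q f →
      ∀ M : Term, f '' interp P M ρ = interp Q M fun n => f '' ρ n) :=
  ⟨fun hf M => hf.image_interp_subset hP M ρ, fun hf M => hf.image_interp hP hQ hρ M⟩
end

section
/- (i) For every morphism θ : A → B of partial pairs there is a unique morphism θ̄ : Ā → B̄ between the free completions such that the restriction of θ̄ to A equals θ. (ii) If θ is an isomorphism between A and B, then θ̄ is an isomorphism between Ā and B̄. -/
universe u v

open Term

/-! Since `Ā` is generated from `A` by the new pairs `(a, α) ∉ dom j`, on which `j̄` is the
identity, a morphism `θ` from `A` into a total pair `C` extends to `Ā` by recursion, sending the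
new pair `(a, α)` to `j_C (θ̄⁺ a, θ̄ α)`, and the morphism condition at the new pairs forces this
value, so the extension is unique. Taking `C = B̄` gives `θ̄`. If `θ` is an isomorphism, composing
`θ̄` with the extension of `θ⁻¹` gives an endomorphism of `Ā` fixing `A`, which by uniqueness is the
identity. -/

lemma IsMorphism.comp {α : Type u} {β : Type v} {γ : Type*} {P : PrePair α} {Q : PrePair β}
    {R : PrePair γ} {g : β → γ} {f : α → β} (hg : IsMorphism Q R g) (hf : IsMorphism P Q f) :
    IsMorphism P R (g ∘ f) := by
  refine ⟨hg.1.comp hf.1, fun a x y ha hx hj => ?_⟩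
  rw [Set.image_comp]
  exact hg.2 _ _ _ (hf.1.mono ha subset_rfl).image_subset (hf.1 hx) (hf.2 a x y ha hx hj)

lemma IsMorphism.id {α : Type u} (P : PrePair α) : IsMorphism P P id :=
  ⟨Set.mapsTo_id _, fun a x y _ _ hj => by simpa using hj⟩

namespace FC

variable {α : Type u} {γ : Type*}

lemma base_injective : Function.Injective (base : α → FC α) :=
  fun _ _ h => base.inj h

lemma stage_monotone (P : PrePair α) : Monotone (stage P) := by
  refine monotone_nat_of_le_succ fun n => ?_
  induction n with
  | zero => exact Set.subset_union_left
  | succ n ih =>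
    rintro t (ht | ⟨a, x, hfin, ha, hx, hnd, rfl⟩)
    · exact Set.mem_union_left _ ht
    · exact Set.mem_union_right _ ⟨a, x, hfin, ha.trans ih, ih hx, hnd, rfl⟩

lemma base_mem_stage_iff {P : PrePair α} {x : α} (n : ℕ) :
    base x ∈ stage P n ↔ x ∈ P.carrier := by
  cases n <;> simp [stage, baseSet]

lemma base_mem_compCarrier_iff {P : PrePair α} {x : α} :
    base x ∈ compCarrier P ↔ x ∈ P.carrier := by
  simp [compCarrier, base_mem_stage_iff]

lemma image_base_subset_compCarrier_iff {P : PrePair α} {a : Set α} :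
    base '' a ⊆ compCarrier P ↔ a ⊆ P.carrier := by
  simp [Set.subset_def, base_mem_compCarrier_iff]

lemma exists_stage {P : PrePair α} {a : Set (FC α)} {x : FC α}
    (hfin : a.Finite) (ha : a ⊆ compCarrier P) (hx : x ∈ compCarrier P) :
    ∃ n, a ⊆ stage P n ∧ x ∈ stage P n := by
  have hfin' : (insert x a).Finite := hfin.insert x
  obtain ⟨n, hn⟩ := (stage_monotone P).directed_le.exists_mem_subset_of_finset_subset_biUnion
    (s := hfin'.toFinset) (by simpa [compCarrier] using Set.insert_subset hx ha)
  rw [Set.Finite.coe_toFinset, Set.insert_subset_iff] at hn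
  exact ⟨n, hn.2, hn.1⟩

lemma node_mem_compCarrier {P : PrePair α} {a : Set (FC α)} {x : FC α}
    (hfin : a.Finite) (ha : a ⊆ compCarrier P) (hx : x ∈ compCarrier P)
    (hnd : ¬ IsOldDom P a x) :
    node (listOf a) x ∈ compCarrier P := by
  obtain ⟨n, han, hxn⟩ := exists_stage hfin ha hx
  exact Set.mem_iUnion.mpr ⟨n + 1, Set.mem_union_right _ ⟨a, x, hfin, han, hxn, hnd, rfl⟩⟩

lemma compCarrier_induction (P : PrePair α) {Q : FC α → Prop}
    (hbase : ∀ x ∈ P.carrier, Q (base x))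
    (hnode : ∀ a x, a.Finite → a ⊆ compCarrier P → x ∈ compCarrier P → ¬ IsOldDom P a x →
      (∀ t ∈ a, Q t) → Q x → Q (node (listOf a) x)) :
    ∀ t ∈ compCarrier P, Q t := by
  suffices ∀ n, ∀ t ∈ stage P n, Q t by
    intro t ht
    obtain ⟨n, hn⟩ := Set.mem_iUnion.mp ht
    exact this n t hn
  intro n
  induction n with
  | zero => rintro t ⟨x, hx, rfl⟩; exact hbase x hx
  | succ n ih =>
    rintro t (⟨x, hx, rfl⟩ | ⟨a, x, hfin, ha, hx, hnd, rfl⟩)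
    · exact hbase x hx
    · exact hnode a x hfin (ha.trans (Set.subset_iUnion _ n)) (Set.mem_iUnion.mpr ⟨n, hx⟩) hnd
        (fun s hs => ih s (ha hs)) (ih x hx)

lemma oldVal_unique {P : PrePair α} {a : Set (FC α)} {x y y' : FC α}
    (h : OldVal P a x y) (h' : OldVal P a x y') : y = y' := by
  obtain ⟨a₀, x₀, y₀, rfl, rfl, hj, rfl⟩ := h
  obtain ⟨a₁, x₁, y₁, ha, hx, hj', rfl⟩ := h'
  obtain rfl := Set.image_injective.mpr base_injective ha
  obtain rfl := base_injective hx
  rw [hj] at hj'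
  cases hj'
  rfl

lemma isOldDom_iff {P : PrePair α} {a : Set (FC α)} {x : FC α} :
    IsOldDom P a x ↔ ∃ y, OldVal P a x y := by
  constructor
  · rintro ⟨a₀, x₀, rfl, rfl, h⟩
    obtain ⟨y₀, hy⟩ := Option.isSome_iff_exists.mp h
    exact ⟨base y₀, a₀, x₀, y₀, rfl, rfl, hy, rfl⟩
  · rintro ⟨y, a₀, x₀, y₀, rfl, rfl, h, rfl⟩
    exact ⟨a₀, x₀, rfl, rfl, by simp [h]⟩

section jbar

variable {P : PrePair α} {a : Set (FC α)} {x y : FC α}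

lemma jbar_of_oldVal (hcond : a.Finite ∧ a ⊆ compCarrier P ∧ x ∈ compCarrier P)
    (h : OldVal P a x y) : jbar P (a, x) = some y := by
  have he : ∃ y, OldVal P a x y := ⟨y, h⟩
  simp only [jbar, if_pos hcond, dif_pos he]
  exact congrArg some (oldVal_unique he.choose_spec h)

lemma jbar_of_not_isOldDom (hcond : a.Finite ∧ a ⊆ compCarrier P ∧ x ∈ compCarrier P)
    (h : ¬ IsOldDom P a x) : jbar P (a, x) = some (node (listOf a) x) := by
  rw [isOldDom_iff] at h
  simp only [jbar, if_pos hcond, dif_neg h]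

lemma domain_of_jbar_eq_some (h : jbar P (a, x) = some y) :
    a.Finite ∧ a ⊆ compCarrier P ∧ x ∈ compCarrier P := by
  by_contra hc
  simp [jbar, if_neg hc] at h

lemma completion_total (P : PrePair α) : (completion P).Total := by
  intro a x hfin ha hx
  by_cases h : IsOldDom P a x
  · obtain ⟨y, hy⟩ := isOldDom_iff.mp h
    exact ⟨y, jbar_of_oldVal ⟨hfin, ha, hx⟩ hy⟩
  · exact ⟨_, jbar_of_not_isOldDom ⟨hfin, ha, hx⟩ h⟩

lemma mem_compCarrier_of_jbar_eq_some (hP : P.Valid) (h : jbar P (a, x) = some y) :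
    y ∈ compCarrier P := by
  have hcond := domain_of_jbar_eq_some h
  by_cases hold : IsOldDom P a x
  · obtain ⟨y', a₀, x₀, y₀, ha, hx, hj, rfl⟩ := isOldDom_iff.mp hold
    rw [jbar_of_oldVal hcond ⟨a₀, x₀, y₀, ha, hx, hj, rfl⟩, Option.some_inj] at h
    exact h ▸ base_mem_compCarrier_iff.mpr (hP.2.1 _ _ _ hj).2.2.2
  · rw [jbar_of_not_isOldDom hcond hold, Option.some_inj] at h
    exact h ▸ node_mem_compCarrier hcond.1 hcond.2.1 hcond.2.2 hold

end jbar

lemma isMorphism_base {P : PrePair α} (hP : P.Valid) : IsMorphism P (completion P) base := by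
  refine ⟨fun x hx => base_mem_compCarrier_iff.mpr hx, fun a x y ha hx hj => ?_⟩
  refine jbar_of_oldVal ⟨(hP.2.1 _ _ _ hj).1.image _, ?_, ?_⟩ ⟨a, x, y, rfl, rfl, hj, rfl⟩
  · exact image_base_subset_compCarrier_iff.mpr ha
  · exact base_mem_compCarrier_iff.mpr hx

/-- The fallback value of `getD` is never used on `Ā` when `C` is total. -/
noncomputable def extend (C : PrePair γ) (g : α → γ) : FC α → γ
  | base x => g x
  | node l x => (C.j ({t | t ∈ l.map (extend C g)}, extend C g x)).getD (extend C g x)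

section extend

variable {A : PrePair α} {C : PrePair γ} {g : α → γ}

@[simp]
lemma extend_base (x : α) : extend C g (base x) = g x := by
  rw [extend]

lemma extend_node {a : Set (FC α)} (hfin : a.Finite) (x : FC α) :
    extend C g (node (listOf a) x) =
      (C.j (extend C g '' a, extend C g x)).getD (extend C g x) := by
  have himage : {t | t ∈ (listOf a).map (extend C g)} = extend C g '' a := by
    ext t
    simp [listOf, hfin]
  rw [extend, himage]

lemma j_extend_eq_extend_node (hC : C.Total) {a : Set (FC α)} {x : FC α} (hfin : a.Finite)
    (ha : extend C g '' a ⊆ C.carrier) (hx : extend C g x ∈ C.carrier) :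
    C.j (extend C g '' a, extend C g x) = some (extend C g (node (listOf a) x)) := by
  obtain ⟨y, hy⟩ := hC _ _ (hfin.image _) ha hx
  rw [extend_node hfin, hy, Option.getD_some]

lemma mapsTo_extend (hC : C.Total) (hCj : ∀ a x y, C.j (a, x) = some y → y ∈ C.carrier)
    (hg : Set.MapsTo g A.carrier C.carrier) :
    Set.MapsTo (extend C g) (compCarrier A) C.carrier := by
  refine compCarrier_induction A (fun x hx => by simpa using hg hx) ?_
  intro a x hfin _ _ _ ha hx
  exact hCj _ _ _ (j_extend_eq_extend_node hC hfin (Set.image_subset_iff.mpr ha) hx)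

lemma isMorphism_extend (hC : C.Total) (hCj : ∀ a x y, C.j (a, x) = some y → y ∈ C.carrier)
    (hg : IsMorphism A C g) : IsMorphism (completion A) C (extend C g) := by
  have hmaps := mapsTo_extend hC hCj hg.1
  refine ⟨hmaps, fun a x y ha hx (hj : jbar A (a, x) = some y) => ?_⟩
  have hcond := domain_of_jbar_eq_some hj
  by_cases hold : IsOldDom A a x
  · obtain ⟨y', a₀, x₀, y₀, rfl, rfl, hj₀, rfl⟩ := isOldDom_iff.mp hold
    rw [jbar_of_oldVal hcond ⟨a₀, x₀, y₀, rfl, rfl, hj₀, rfl⟩, Option.some_inj] at hj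
    subst hj
    rw [Set.image_image]
    simpa using hg.2 a₀ x₀ y₀ (image_base_subset_compCarrier_iff.mp ha)
      (base_mem_compCarrier_iff.mp hx) hj₀
  · rw [jbar_of_not_isOldDom hcond hold, Option.some_inj] at hj
    subst hj
    exact j_extend_eq_extend_node hC hcond.1 (hmaps.mono ha subset_rfl).image_subset (hmaps hx)

end extend

lemma eqOn_of_isMorphism {A : PrePair α} {C : PrePair γ} {g₁ g₂ : FC α → γ}
    (h₁ : IsMorphism (completion A) C g₁) (h₂ : IsMorphism (completion A) C g₂)
    (hbase : ∀ x ∈ A.carrier, g₁ (base x) = g₂ (base x)) :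
    Set.EqOn g₁ g₂ (compCarrier A) := by
  refine compCarrier_induction A hbase fun a x hfin ha hx hold himage hx' => ?_
  have hj : jbar A (a, x) = some (node (listOf a) x) :=
    jbar_of_not_isOldDom ⟨hfin, ha, hx⟩ hold
  have e₁ := h₁.2 a x _ ha hx hj
  rw [Set.image_congr himage, hx', h₂.2 a x _ ha hx hj] at e₁
  exact (Option.some_inj.mp e₁).symm

section completionMap

variable {β : Type v} {A : PrePair α} {B : PrePair β}

noncomputable def completionMap (B : PrePair β) (f : α → β) : FC α → FC β :=
  extend (completion B) (base ∘ f)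

@[simp]
lemma completionMap_base (f : α → β) (x : α) : completionMap B f (base x) = base (f x) :=
  extend_base x

lemma isMorphism_completionMap (hB : B.Valid) {f : α → β} (hf : IsMorphism A B f) :
    IsMorphism (completion A) (completion B) (completionMap B f) :=
  isMorphism_extend (completion_total B) (fun _ _ _ => mem_compCarrier_of_jbar_eq_some hB)
    ((isMorphism_base hB).comp hf)

lemma completionMap_leftInvOn (hA : A.Valid) (hB : B.Valid) {f : α → β} {f' : β → α}
    (hf : IsMorphism A B f) (hf' : IsMorphism B A f') (hl : ∀ x ∈ A.carrier, f' (f x) = x) :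
    ∀ t ∈ compCarrier A, completionMap A f' (completionMap B f t) = t :=
  eqOn_of_isMorphism ((isMorphism_completionMap hA hf').comp (isMorphism_completionMap hB hf))
    (IsMorphism.id _) fun x hx => by simp [hl x hx]

lemma isIso_completionMap (hA : A.Valid) (hB : B.Valid) {f : α → β} (h : IsIso A B f) :
    IsIso (completion A) (completion B) (completionMap B f) := by
  obtain ⟨hf, f', hf', hl, hr⟩ := h
  exact ⟨isMorphism_completionMap hB hf, completionMap A f', isMorphism_completionMap hA hf',
    completionMap_leftInvOn hA hB hf hf' hl, completionMap_leftInvOn hB hA hf' hf hr⟩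

end completionMap

end FC

/-- (i) Every morphism `θ : A → B` of partial pairs extends to
a unique morphism between the free completions whose restriction to `A` is `θ`;
(ii) if `θ` is an isomorphism then so is its extension. -/
theorem morphism_extends_to_completion {α : Type u} {β : Type v}
    (A : PrePair α) (B : PrePair β) (hA : A.Valid) (hB : B.Valid)
    (f : α → β) (hf : IsMorphism A B f) :
    ∃ g : FC α → FC β,
      (IsMorphism (completion A) (completion B) g ∧
        ∀ x ∈ A.carrier, g (FC.base x) = FC.base (f x)) ∧
      (∀ g' : FC α → FC β,
        IsMorphism (completion A) (completion B) g' →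
        (∀ x ∈ A.carrier, g' (FC.base x) = FC.base (f x)) →
        ∀ t ∈ (completion A).carrier, g' t = g t) ∧
      (IsIso A B f → IsIso (completion A) (completion B) g) := by
  have hg := FC.isMorphism_completionMap hB hf
  refine ⟨FC.completionMap B f, ⟨hg, fun x _ => FC.completionMap_base f x⟩, ?_,
    FC.isIso_completionMap hA hB⟩
  intro g' hg' hbase
  exact FC.eqOn_of_isMorphism hg' hg fun x hx => by simp [hbase x hx]
end
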